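/- Let m > 0 and 0 < s < m/2 be real numbers, let O = (m/2, 0) be the launch point, and let t = (t₁, t₂) be any point with m/2 − s ≤ t₁ ≤ m/2 + s and m − s ≤ t₂ ≤ m. A shot from O that reflects exactly once off the left wall (the line x = 0) and then reaches t travels along the straight segment from O to the mirror image (−t₁, t₂) of t. The slope ratio of this unfolded segment satisfies (m − s)/(m + s) ≤ t₂/(m/2 + t₁) ≤ m/(m − s). (Hence as s/m → 0, the rebound angle tends to 45°; all single-rebound shots that hit the small central square arrive at approximately 45°.) -/

import Mathlib

open Set

theorem div_mem_Icc_div_of_mem_Icc {α : Type*} [Field α] [LinearOrder α] [IsStrictOrderedRing α]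
    {a b c d x y : α} (ha : 0 ≤ a) (hc : 0 < c) (hx : x ∈ Icc a b) (hy : y ∈ Icc c d) :
    x / y ∈ Icc (a / d) (b / c) :=
  ⟨div_le_div₀ (ha.trans hx.1) hx.1 (hc.trans_le hy.1) hy.2,
    div_le_div₀ (ha.trans (hx.1.trans hx.2)) hx.2 hc hy.1⟩

theorem rebound_shot_nearly_45_degrees_general
    (m s t₁ t₂ : ℝ) (hsm : s < m / 2)
    (ht₁l : m / 2 - s ≤ t₁) (ht₁r : t₁ ≤ m / 2 + s)
    (ht₂l : m - s ≤ t₂) (ht₂r : t₂ ≤ m) :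
    (m - s) / (m + s) ≤ t₂ / (m / 2 + t₁) ∧
    t₂ / (m / 2 + t₁) ≤ m / (m - s) := by
  -- the target interval for `t₁` is nonempty, so `0 ≤ s`, and then `s < m - s`
  have hms : 0 < m - s := by linarith
  have hrun : m / 2 + t₁ ∈ Icc (m - s) (m + s) := ⟨by linarith, by linarith⟩
  exact div_mem_Icc_div_of_mem_Icc hms.le hms ⟨ht₂l, ht₂r⟩ hrun

/-- A shot from `O = (m/2, 0)` that reflects once off the left wall `x = 0` and
then reaches a target `t = (t₁, t₂)` in the small square
`[m/2 - s, m/2 + s] × [m - s, m]` (with `0 < s < m/2`) travels, after unfolding,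
along the straight segment from `O` to the mirror image `(-t₁, t₂)` of `t`.
The slope ratio `t₂ / (m/2 + t₁)` of this unfolded segment (vertical rise over
horizontal run `m/2 - (-t₁) = m/2 + t₁`) satisfies
`(m - s)/(m + s) ≤ t₂/(m/2 + t₁) ≤ m/(m - s)`. -/
theorem rebound_shot_nearly_45_degrees
    (m s t₁ t₂ : ℝ) (hm : 0 < m) (hs : 0 < s) (hsm : s < m / 2)
    (ht₁l : m / 2 - s ≤ t₁) (ht₁r : t₁ ≤ m / 2 + s)
    (ht₂l : m - s ≤ t₂) (ht₂r : t₂ ≤ m) :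
    (m - s) / (m + s) ≤ t₂ / (m / 2 + t₁) ∧
    t₂ / (m / 2 + t₁) ≤ m / (m - s) :=
  rebound_shot_nearly_45_degrees_general m s t₁ t₂ hsm ht₁l ht₁r ht₂l ht₂r
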